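/- For every graph G and every set A of edges of G, the isolation number of the graph G_A obtained by subdividing each edge in A once satisfies ι(G) ≤ ι(G_A) ≤ ι(G) + |A|. -/

import Mathlib

open SimpleGraph

/-- `v` lies in the closed neighbourhood of the set `D`. -/
def inClosedNbhd {V : Type*} (G : SimpleGraph V) (D : Set V) (v : V) : Prop :=
  ∃ d ∈ D, d = v ∨ G.Adj d v

/-- `D` is an isolating set of `G`: the graph induced on the vertices outside
`N[D]` has no edges. -/
def IsIsolating {V : Type*} (G : SimpleGraph V) (D : Set V) : Prop :=
  ∀ u v : V, G.Adj u v → inClosedNbhd G D u ∨ inClosedNbhd G D v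

/-- The isolation number of a finite graph. -/
noncomputable def iso {V : Type*} (G : SimpleGraph V) [Fintype V] : ℕ :=
  sInf {n | ∃ D : Finset V, D.card = n ∧ IsIsolating G ↑D}

/-- The graph obtained from `G` by subdividing each edge in `A` once; the new
(subdivision) vertices are the elements of `A`. -/
def subdivide {V : Type*} (G : SimpleGraph V) (A : Finset (Sym2 V)) :
    SimpleGraph (V ⊕ {e : Sym2 V // e ∈ A}) where
  Adj x y :=
    match x, y with
    | Sum.inl u, Sum.inl v => G.Adj u v ∧ s(u, v) ∉ A
    | Sum.inl u, Sum.inr e => u ∈ (e : Sym2 V)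
    | Sum.inr e, Sum.inl u => u ∈ (e : Sym2 V)
    | Sum.inr _, Sum.inr _ => False
  symm := by
    constructor
    rintro (u | e) (v | f) h <;> dsimp only at h ⊢ <;>
      first
        | exact ⟨h.1.symm, by rw [Sym2.eq_swap]; exact h.2⟩
        | exact h
        | exact h.elim
  loopless := by
    constructor
    rintro (u | e) h <;> dsimp only at h <;>
      first
        | exact G.loopless.irrefl u h.1
        | exact h

/-- A graph is `(ι,q)`-critical. -/
def IotaCritical {V : Type*} (G : SimpleGraph V) [Fintype V] (q : ℕ) : Prop :=
  (∀ A : Finset (Sym2 V), ↑A ⊆ G.edgeSet → A.card = q →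
      iso G < iso (subdivide G A)) ∧
  (∃ A : Finset (Sym2 V), ↑A ⊆ G.edgeSet ∧ A.card = q - 1 ∧
      iso (subdivide G A) = iso G)

/-!
Projecting each subdivision vertex onto one end of its edge turns an isolating set of `G_A` into
one of `G` that is no larger: the projection sends adjacent vertices to equal or adjacent ones,
and every edge `uv` of `G` is the image of an edge of `G_A` with both ends landing in `{u, v}`.
Conversely, an isolating set of `G` together with all `|A|` subdivision vertices isolates `G_A`:
edges at subdivision vertices are covered by them, and a vertex `w` dominated in `G` by `d` is
dominated in `G_A` either by `d` or by the vertex subdividing `dw`.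
-/

section Isolation

variable {V W : Type*}

lemma iso_le_card [Fintype V] (G : SimpleGraph V) {D : Finset V} (hD : IsIsolating G ↑D) :
    iso G ≤ D.card :=
  Nat.sInf_le ⟨D, rfl, hD⟩

lemma isIsolating_univ [Fintype V] (G : SimpleGraph V) :
    IsIsolating G ↑(Finset.univ : Finset V) :=
  fun u _ _ => Or.inl ⟨u, Finset.mem_coe.2 (Finset.mem_univ u), Or.inl rfl⟩

lemma exists_isIsolating_card_eq_iso [Fintype V] (G : SimpleGraph V) :
    ∃ D : Finset V, D.card = iso G ∧ IsIsolating G ↑D :=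
  Nat.sInf_mem (⟨_, _, rfl, isIsolating_univ G⟩ :
    {n | ∃ D : Finset V, D.card = n ∧ IsIsolating G ↑D}.Nonempty)

variable {G : SimpleGraph V} {H : SimpleGraph W} {f : W → V}

lemma inClosedNbhd.image (hf : ∀ x y, H.Adj x y → f x = f y ∨ G.Adj (f x) (f y)) {D : Set W}
    {x : W} (hx : inClosedNbhd H D x) : inClosedNbhd G (f '' D) (f x) :=
  let ⟨d, hd, hdx⟩ := hx
  ⟨f d, Set.mem_image_of_mem f hd, hdx.elim (fun h => Or.inl (congrArg f h)) (hf d x)⟩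

lemma IsIsolating.image (hf : ∀ x y, H.Adj x y → f x = f y ∨ G.Adj (f x) (f y))
    (hcover : ∀ u v, G.Adj u v → ∃ x y, H.Adj x y ∧ f x ∈ s(u, v) ∧ f y ∈ s(u, v))
    {D : Set W} (hD : IsIsolating H D) : IsIsolating G (f '' D) := by
  intro u v huv
  obtain ⟨x, y, hxy, hxuv, hyuv⟩ := hcover u v huv
  have key : ∀ z, f z ∈ s(u, v) → inClosedNbhd H D z →
      inClosedNbhd G (f '' D) u ∨ inClosedNbhd G (f '' D) v := by
    intro z hz hzD
    rcases Sym2.mem_iff.1 hz with h | h <;> rw [← h]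
    exacts [Or.inl (hzD.image hf), Or.inr (hzD.image hf)]
  exact (hD x y hxy).elim (key x hxuv) (key y hyuv)

lemma iso_le_iso_of_map [Fintype V] [Fintype W]
    (hf : ∀ x y, H.Adj x y → f x = f y ∨ G.Adj (f x) (f y))
    (hcover : ∀ u v, G.Adj u v → ∃ x y, H.Adj x y ∧ f x ∈ s(u, v) ∧ f y ∈ s(u, v)) :
    iso G ≤ iso H := by
  classical
  obtain ⟨D, hcard, hD⟩ := exists_isIsolating_card_eq_iso H
  have hfD : IsIsolating G ↑(D.image f) := by
    rw [Finset.coe_image]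
    exact hD.image hf hcover
  calc iso G ≤ (D.image f).card := iso_le_card G hfD
    _ ≤ D.card := Finset.card_image_le
    _ = iso H := hcard

end Isolation

namespace subdivide

variable {V : Type*} {G : SimpleGraph V} {A : Finset (Sym2 V)}

noncomputable def proj : V ⊕ {e : Sym2 V // e ∈ A} → V :=
  Sum.elim id fun e => (e : Sym2 V).out.1

lemma proj_inr_mem (e : {e : Sym2 V // e ∈ A}) : proj (.inr e) ∈ (e : Sym2 V) :=
  Sym2.out_fst_mem _

lemma eq_or_adj_proj_of_mem (hA : ↑A ⊆ G.edgeSet) {e : {e : Sym2 V // e ∈ A}} {u : V}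
    (hu : u ∈ (e : Sym2 V)) : proj (.inr e) = u ∨ G.Adj (proj (.inr e)) u := by
  refine or_iff_not_imp_left.2 fun hne => ?_
  have he : (e : Sym2 V) = s(proj (.inr e), u) :=
    (Sym2.mem_and_mem_iff hne).1 ⟨proj_inr_mem e, hu⟩
  have hmem := hA e.2
  rwa [he, SimpleGraph.mem_edgeSet] at hmem

lemma proj_eq_or_adj (hA : ↑A ⊆ G.edgeSet) :
    ∀ x y, (subdivide G A).Adj x y → proj x = proj y ∨ G.Adj (proj x) (proj y)
  | .inl _, .inl _, h => Or.inr h.1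
  | .inl _, .inr _, h => (eq_or_adj_proj_of_mem hA h).imp Eq.symm fun h => h.symm
  | .inr _, .inl _, h => eq_or_adj_proj_of_mem hA h
  | .inr _, .inr _, h => h.elim

lemma exists_adj_proj_mem (u v : V) (huv : G.Adj u v) :
    ∃ x y, (subdivide G A).Adj x y ∧ proj x ∈ s(u, v) ∧ proj y ∈ s(u, v) := by
  by_cases he : s(u, v) ∈ A
  · exact ⟨.inl u, .inr ⟨s(u, v), he⟩, Sym2.mem_mk_left u v, Sym2.mem_mk_left u v,
      proj_inr_mem _⟩
  · exact ⟨.inl u, .inl v, ⟨huv, he⟩, Sym2.mem_mk_left u v, Sym2.mem_mk_right u v⟩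

lemma inClosedNbhd_inl_disjSum {D : Finset V} {w : V} (hw : inClosedNbhd G ↑D w) :
    inClosedNbhd (subdivide G A) ↑(D.disjSum (.univ : Finset {e // e ∈ A})) (.inl w) := by
  obtain ⟨d, hd, rfl | hdw⟩ := hw
  · exact ⟨.inl d, by simpa using hd, Or.inl rfl⟩
  by_cases he : s(d, w) ∈ A
  · exact ⟨.inr ⟨s(d, w), he⟩, by simp, Or.inr (Sym2.mem_mk_right d w)⟩
  · exact ⟨.inl d, by simpa using hd, Or.inr ⟨hdw, he⟩⟩

lemma isIsolating_disjSum_univ {D : Finset V} (hD : IsIsolating G ↑D) :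
    IsIsolating (subdivide G A) ↑(D.disjSum (.univ : Finset {e // e ∈ A})) := by
  have hsub : ∀ e : {e : Sym2 V // e ∈ A},
      inClosedNbhd (subdivide G A) ↑(D.disjSum (.univ : Finset {e // e ∈ A})) (.inr e) :=
    fun e => ⟨.inr e, by simp, Or.inl rfl⟩
  rintro (u | e) (v | f) h
  · exact (hD u v h.1).imp inClosedNbhd_inl_disjSum inClosedNbhd_inl_disjSum
  · exact Or.inr (hsub f)
  · exact Or.inl (hsub e)
  · exact h.elim

end subdivide

theorem stmt1 {V : Type*} [Fintype V] (G : SimpleGraph V) (A : Finset (Sym2 V))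
    (hA : ↑A ⊆ G.edgeSet) :
    iso G ≤ iso (subdivide G A) ∧ iso (subdivide G A) ≤ iso G + A.card := by
  refine ⟨iso_le_iso_of_map (subdivide.proj_eq_or_adj hA) subdivide.exists_adj_proj_mem, ?_⟩
  obtain ⟨D, hcard, hD⟩ := exists_isIsolating_card_eq_iso G
  calc iso (subdivide G A) ≤ (D.disjSum (Finset.univ : Finset {e // e ∈ A})).card :=
        iso_le_card _ (subdivide.isIsolating_disjSum_univ hD)
    _ = iso G + A.card := by rw [Finset.card_disjSum, hcard, Finset.card_univ, Fintype.card_coe]
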